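/- Let G be a normal hypergraph and s ≥ k ≥ 1 integers such that G is (s,k)-unbreakable and |V(G)| ≥ 3s. Then the family 𝒯 = {A ⊆ E(G) : |V(A)| ≤ |V(Ā)| and λ(A) < k} is a tangle of order k of G. -/
import Mathlib


open Finset

variable {V E : Type} [Fintype V] [DecidableEq V] [Fintype E] [DecidableEq E]

/-- `V(A)`: the union of the vertex sets of the hyperedges in `A`. -/
def hVerts (inc : E → Finset V) (A : Finset E) : Finset V :=
  A.biUnion inc

/-- The border `bd(A) = V(A) ∩ V(Ā)` of a set of hyperedges. -/
def hBd (inc : E → Finset V) (A : Finset E) : Finset V :=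
  hVerts inc A ∩ hVerts inc Aᶜ

/-- The order function `λ(A) = |bd(A)|`. -/
def hLam (inc : E → Finset V) (A : Finset E) : ℕ :=
  (hBd inc A).card

/-- The hypergraph is normal: every vertex belongs to at least two distinct hyperedges. -/
def HNormal (inc : E → Finset V) : Prop :=
  ∀ v : V, ∃ e1 e2 : E, e1 ≠ e2 ∧ v ∈ inc e1 ∧ v ∈ inc e2

/-- The hypergraph is `(s, k)`-unbreakable: there is no `A ⊆ E(G)` with `λ(A) < k`,
`|V(A)| ≥ s` and `|V(Ā)| ≥ s`. -/
def HUnbreakable (inc : E → Finset V) (s k : ℕ) : Prop :=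
  ¬ ∃ A : Finset E, hLam inc A < k ∧ s ≤ (hVerts inc A).card ∧ s ≤ (hVerts inc Aᶜ).card

/-- `𝒯` is a tangle of order `k` of the hypergraph. -/
def IsTangle (inc : E → Finset V) (k : ℕ) (𝒯 : Set (Finset E)) : Prop :=
  (∀ A ∈ 𝒯, hLam inc A < k) ∧
  (∀ A : Finset E, hLam inc A < k → A ∈ 𝒯 ∨ Aᶜ ∈ 𝒯) ∧
  (∀ A ∈ 𝒯, ∀ B ∈ 𝒯, ∀ C ∈ 𝒯, A ∪ B ∪ C ≠ Finset.univ) ∧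
  (∀ e : E, ({e}ᶜ : Finset E) ∉ 𝒯)

omit [Fintype V] in
lemma hLam_compl' (inc : E → Finset V) (A : Finset E) : hLam inc Aᶜ = hLam inc A := by
  simp [hLam, hBd, compl_compl, inter_comm]

/-- Let the hypergraph be normal and `(s, k)`-unbreakable with `s ≥ k ≥ 1` and
`|V(G)| ≥ 3s`. Then the family `{A ⊆ E(G) : |V(A)| ≤ |V(Ā)| and λ(A) < k}` is a tangle of
order `k`. -/

theorem vertexCardinality_tangle (inc : E → Finset V) (hnorm : HNormal inc)
    (s k : ℕ) (hk : 1 ≤ k) (hsk : k ≤ s)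
    (hunb : HUnbreakable inc s k) (hcard : 3 * s ≤ Fintype.card V) :
    IsTangle inc k
      {A : Finset E | (hVerts inc A).card ≤ (hVerts inc Aᶜ).card ∧ hLam inc A < k} := by
  classical
  set T := {A : Finset E | (hVerts inc A).card ≤ (hVerts inc Aᶜ).card ∧ hLam inc A < k} with hT
  have hsmall : ∀ A : Finset E, A ∈ T → (hVerts inc A).card < s := by
    intro A hA
    by_contra h
    push_neg at h
    exact hunb ⟨A, hA.2, h, le_trans h hA.1⟩
  refine ⟨fun A hA => hA.2, ?_, ?_, ?_⟩
  · intro A hl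
    rcases le_total (hVerts inc A).card (hVerts inc Aᶜ).card with h | h
    · exact Or.inl ⟨h, hl⟩
    · exact Or.inr ⟨by rwa [compl_compl], by rwa [hLam_compl']⟩
  · intro A hA B hB C hC habc
    have hV : hVerts inc (A ∪ B ∪ C) = Finset.univ := by
      rw [habc]
      ext v
      simp only [hVerts, mem_biUnion, mem_univ, iff_true]
      obtain ⟨e1, e2, hne, h1, h2⟩ := hnorm v
      exact ⟨e1, trivial, h1⟩
    have hsub : hVerts inc (A ∪ B ∪ C) ⊆ hVerts inc A ∪ hVerts inc B ∪ hVerts inc C := by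
      intro v hv
      simp only [hVerts, mem_biUnion, mem_union] at hv ⊢
      obtain ⟨e, he, hve⟩ := hv
      rcases he with (he | he) | he
      · exact Or.inl (Or.inl ⟨e, he, hve⟩)
      · exact Or.inl (Or.inr ⟨e, he, hve⟩)
      · exact Or.inr ⟨e, he, hve⟩
    have h1 := Finset.card_le_card hsub
    rw [hV, Finset.card_univ] at h1
    have h2 : (hVerts inc A ∪ hVerts inc B ∪ hVerts inc C).card ≤
        (hVerts inc A).card + (hVerts inc B).card + (hVerts inc C).card :=
      le_trans (Finset.card_union_le _ _)
        (Nat.add_le_add_right (Finset.card_union_le _ _) _)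
    have hA' := hsmall A hA
    have hB' := hsmall B hB
    have hC' := hsmall C hC
    omega
  · intro e he
    have hVe : hVerts inc ({e}ᶜ : Finset E) = Finset.univ := by
      ext v
      simp only [hVerts, mem_biUnion, mem_univ, iff_true, mem_compl, mem_singleton]
      obtain ⟨e1, e2, hne, h1, h2⟩ := hnorm v
      by_cases h : e1 = e
      · exact ⟨e2, by rintro rfl; exact hne h, h2⟩
      · exact ⟨e1, h, h1⟩
    refine hunb ⟨{e}ᶜ, he.2, ?_, ?_⟩
    · rw [hVe, Finset.card_univ]; omega
    · refine le_trans ?_ he.1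
      rw [hVe, Finset.card_univ]; omega
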